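/- Suppose that for all m ∈ ℕ and all b ∈ ℝ^m, P(|b·ε| ≤ ‖b‖) ≥ 1/2. Then for all n, all a ∈ ℝ^n with ‖a‖ = 1, and all δ > 0: P(a·ε > δ) + P(a·ε > 1/δ) ≤ 1/2. -/

import Mathlib

open Finset
open scoped Classical

/-- sign of a Boolean: `true ↦ 1`, `false ↦ -1` (a Rademacher value). -/
noncomputable def rsign (b : Bool) : ℝ := if b then 1 else -1

/-- Probability of an event under the uniform distribution on `{-1,1}^n`. -/
noncomputable def prob (n : ℕ) (E : (Fin n → Bool) → Prop) : ℝ :=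
  ((Finset.univ.filter fun s => E s).card : ℝ) / 2 ^ n

lemma rsign_not (x : Bool) : rsign (!x) = - rsign x := by
  cases x <;> simp [rsign]

/-- If `P(|b·ε| ≤ ‖b‖) ≥ 1/2` for all `m` and `b ∈ ℝ^m`, then for all `n`, every
unit vector `a ∈ ℝ^n` and every `δ > 0`: `P(a·ε > δ) + P(a·ε > 1/δ) ≤ 1/2`. -/
theorem stmt_17
    (h : ∀ m : ℕ, ∀ b : Fin m → ℝ,
      prob m (fun s => |∑ i, b i * rsign (s i)| ≤ Real.sqrt (∑ i, (b i) ^ 2)) ≥ 1 / 2) :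
    ∀ n : ℕ, ∀ a : Fin n → ℝ, Real.sqrt (∑ i, (a i) ^ 2) = 1 → ∀ δ : ℝ, 0 < δ →
      prob n (fun s => ∑ i, a i * rsign (s i) > δ) +
        prob n (fun s => ∑ i, a i * rsign (s i) > 1 / δ) ≤ 1 / 2 := by
  intro n a ha δ hδ
  set b : ℝ := (δ - 1/δ)/2 with hb
  set c : ℝ := (δ + 1/δ)/2 with hc
  have hδ' : (0:ℝ) < 1/δ := by positivity
  have hcpos : 0 < c := by positivity
  have hcb1 : δ - b = c := by rw [hb, hc]; ring
  have hcb2 : 1/δ + b = c := by rw [hb, hc]; ring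
  set a' : Fin (n+1) → ℝ := Fin.snoc a b with ha'
  have hsuma : ∑ i, (a i)^2 = 1 := by
    have h0 : (0:ℝ) ≤ ∑ i, (a i)^2 := by positivity
    nlinarith [Real.sq_sqrt h0, ha]
  have hsum : ∑ i, (a' i)^2 = 1 + b^2 := by
    rw [Fin.sum_univ_castSucc]
    simp only [ha', Fin.snoc_castSucc, Fin.snoc_last]
    rw [hsuma]
  have hsqrt : Real.sqrt (∑ i, (a' i)^2) = c := by
    rw [hsum]
    have h1 : 1 + b^2 = c^2 := by
      rw [hb, hc]; field_simp; ring
    rw [h1, Real.sqrt_sq hcpos.le]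
  -- sum over snoc
  have hS : ∀ (s : Fin n → Bool) (x : Bool),
      ∑ i, a' i * rsign ((Fin.snoc s x : Fin (n+1) → Bool) i) =
        (∑ i, a i * rsign (s i)) + b * rsign x := by
    intro s x
    rw [Fin.sum_univ_castSucc]
    simp [ha', Fin.snoc_castSucc, Fin.snoc_last]
  -- the finsets
  set A := univ.filter (fun s : Fin n → Bool => ∑ i, a i * rsign (s i) > δ) with hA
  set B := univ.filter (fun s : Fin n → Bool => ∑ i, a i * rsign (s i) > 1/δ) with hB
  set C := univ.filter (fun t : Fin (n+1) → Bool => ∑ i, a' i * rsign (t i) > c) with hC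
  set D := univ.filter (fun t : Fin (n+1) → Bool => ∑ i, a' i * rsign (t i) < -c) with hD
  set K := univ.filter
    (fun t : Fin (n+1) → Bool => |∑ i, a' i * rsign (t i)| ≤ c) with hK
  -- claim 1 : A.card + B.card ≤ C.card
  have snoc_inj : ∀ x : Bool, Function.Injective (fun s : Fin n → Bool => (Fin.snoc s x : Fin (n+1) → Bool)) := by
    intro x s s' hss
    have := congrArg Fin.init hss
    simpa [Fin.init_snoc] using this
  have claim1 : A.card + B.card ≤ C.card := by
    have hsub : (A.image (fun s => (Fin.snoc s false : Fin (n+1) → Bool))) ∪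
        (B.image (fun s => (Fin.snoc s true : Fin (n+1) → Bool))) ⊆ C := by
      intro t ht
      simp only [Finset.mem_union, Finset.mem_image, hA, hB, Finset.mem_filter,
        Finset.mem_univ, true_and] at ht
      rcases ht with ⟨s, hs, rfl⟩ | ⟨s, hs, rfl⟩
      · simp only [hC, Finset.mem_filter, Finset.mem_univ, true_and]
        rw [hS]
        have hrs : rsign false = -1 := by simp [rsign]
        rw [hrs]; linarith
      · simp only [hC, Finset.mem_filter, Finset.mem_univ, true_and]
        rw [hS]
        have hrs : rsign true = 1 := by simp [rsign]
        rw [hrs]; linarith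
    have hdisj : Disjoint (A.image (fun s => (Fin.snoc s false : Fin (n+1) → Bool)))
        (B.image (fun s => (Fin.snoc s true : Fin (n+1) → Bool))) := by
      rw [Finset.disjoint_left]
      rintro t ht ht'
      simp only [Finset.mem_image] at ht ht'
      obtain ⟨s, _, rfl⟩ := ht
      obtain ⟨s', _, hss⟩ := ht'
      have := congrArg (fun f => f (Fin.last n)) hss
      simp [Fin.snoc_last] at this
    calc A.card + B.card
        = (A.image (fun s => (Fin.snoc s false : Fin (n+1) → Bool))).card +
          (B.image (fun s => (Fin.snoc s true : Fin (n+1) → Bool))).card := by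
          rw [Finset.card_image_of_injective _ (snoc_inj false),
            Finset.card_image_of_injective _ (snoc_inj true)]
      _ = ((A.image (fun s => (Fin.snoc s false : Fin (n+1) → Bool))) ∪
          (B.image (fun s => (Fin.snoc s true : Fin (n+1) → Bool)))).card := (Finset.card_union_of_disjoint hdisj).symm
      _ ≤ C.card := Finset.card_le_card hsub
  -- claim 2 : D.card = C.card
  have claim2 : D.card = C.card := by
    apply Finset.card_bij (fun t _ => fun i => !(t i))
    · intro t ht
      simp only [hD, Finset.mem_filter, Finset.mem_univ, true_and] at ht
      simp only [hC, Finset.mem_filter, Finset.mem_univ, true_and]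
      have : ∑ i, a' i * rsign (!(t i)) = -∑ i, a' i * rsign (t i) := by
        rw [← Finset.sum_neg_distrib]
        exact Finset.sum_congr rfl fun i _ => by rw [rsign_not]; ring
      rw [this]; linarith
    · intro t ht t' ht' he
      funext i
      have := congrFun he i
      simpa using this
    · intro t ht
      refine ⟨fun i => !(t i), ?_, by funext i; simp⟩
      simp only [hC, Finset.mem_filter, Finset.mem_univ, true_and] at ht
      simp only [hD, Finset.mem_filter, Finset.mem_univ, true_and]
      have : ∑ i, a' i * rsign (!(t i)) = -∑ i, a' i * rsign (t i) := by
        rw [← Finset.sum_neg_distrib]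
        exact Finset.sum_congr rfl fun i _ => by rw [rsign_not]; ring
      rw [this]; linarith
  -- claim 3 : C, D, K pairwise disjoint
  have claim3 : C.card + D.card + K.card ≤ 2^(n+1) := by
    have hCD : Disjoint C D := by
      rw [Finset.disjoint_left]
      intro t ht ht'
      simp only [hC, Finset.mem_filter, Finset.mem_univ, true_and] at ht
      simp only [hD, Finset.mem_filter, Finset.mem_univ, true_and] at ht'
      linarith
    have hCDK : Disjoint (C ∪ D) K := by
      rw [Finset.disjoint_left]
      intro t ht ht'
      simp only [hK, Finset.mem_filter, Finset.mem_univ, true_and] at ht'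
      rw [abs_le] at ht'
      simp only [Finset.mem_union, hC, hD, Finset.mem_filter, Finset.mem_univ,
        true_and] at ht
      rcases ht with ht | ht <;> linarith [ht'.1, ht'.2]
    calc C.card + D.card + K.card
        = (C ∪ D).card + K.card := by rw [Finset.card_union_of_disjoint hCD]
      _ = ((C ∪ D) ∪ K).card := (Finset.card_union_of_disjoint hCDK).symm
      _ ≤ (Finset.univ : Finset (Fin (n+1) → Bool)).card := Finset.card_le_card (Finset.subset_univ _)
      _ = 2^(n+1) := by simp [Finset.card_univ]
  -- claim 4 : (K.card:ℝ) ≥ 2^n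
  have claim4 : (2:ℝ)^n ≤ K.card := by
    have hh := h (n+1) a'
    rw [hsqrt] at hh
    unfold prob at hh
    rw [ge_iff_le, le_div_iff₀ (by positivity)] at hh
    have : (K.card : ℝ) = ((univ.filter fun t : Fin (n+1) → Bool =>
        |∑ i, a' i * rsign (t i)| ≤ c).card : ℝ) := by rw [hK]
    rw [this]
    calc (2:ℝ)^n = 1/2 * 2^(n+1) := by ring
      _ ≤ _ := hh
  -- finish
  have hfin : (A.card : ℝ) + B.card ≤ 2^n / 2 := by
    have h1 : (A.card : ℝ) + B.card ≤ C.card := by exact_mod_cast claim1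
    have h2 : (C.card : ℝ) + D.card + K.card ≤ 2^(n+1) := by
      exact_mod_cast claim3
    have h3 : (D.card : ℝ) = C.card := by exact_mod_cast claim2
    have : (2:ℝ)^(n+1) = 2 * 2^n := by ring
    nlinarith [claim4]
  unfold prob
  rw [← add_div, div_le_iff₀ (by positivity : (0:ℝ) < 2^n)]
  calc ((A.card : ℝ)) + B.card ≤ 2^n/2 := hfin
    _ = 1/2 * 2^n := by ring
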